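/- arXiv:2501.15559 — 4 statements merged into one kernel-verified Lean document; each statement's English description precedes it below -/
import Mathlib

section
/- Let X₁,…,Xₙ be independent random variables with Xᵢ ∈ [0,1] almost surely, E[Xᵢ] = μᵢ, and set X̄ = (1/n)Σᵢ Xᵢ, μ = (1/n)Σᵢ μᵢ. Then for any γ ∈ ℝ, E[exp(n·d_γ(X̄ ‖ μ))] ≤ 1, where d_γ(p‖q) = γp − log(1 − q + q·e^γ). -/
open MeasureTheory ProbabilityTheory Real

/-- Relaxed binary relative entropy `d_γ(p‖q) = γp − log(1 − q + q e^γ)`. -/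
noncomputable def binKLRelaxed (γ p q : ℝ) : ℝ :=
  γ * p - Real.log (1 - q + q * Real.exp γ)

/-!
Since `exp (n d_γ(X̄‖μ)) = e^{γ ∑ Xᵢ} / (1 − μ + μ e^γ)^n`, it suffices to bound the moment
generating function of `∑ Xᵢ` at `γ`. By independence it is `∏ E e^{γ Xᵢ}`, and each factor is
at most `1 − μᵢ + μᵢ e^γ` by convexity of `exp` on `[0, γ]`. AM–GM bounds the product of these
factors by the `n`-th power of their mean, which is `1 − μ + μ e^γ` because the factors are affine
in `μᵢ`.
-/

open Finset

theorem Real.prod_le_mean_pow {ι : Type*} (s : Finset ι) (z : ι → ℝ) (hz : ∀ i ∈ s, 0 ≤ z i) :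
    ∏ i ∈ s, z i ≤ ((∑ i ∈ s, z i) / #s) ^ #s := by
  rcases s.eq_empty_or_nonempty with rfl | hs
  · simp
  have hcard : (#s : ℝ) ≠ 0 := by positivity
  have amgm := Real.geom_mean_le_arith_mean s (fun _ ↦ 1) z (fun _ _ ↦ zero_le_one)
    (by simpa using hs) hz
  simp only [rpow_one, one_mul, sum_const, nsmul_eq_mul, mul_one] at amgm
  calc ∏ i ∈ s, z i = ((∏ i ∈ s, z i) ^ (#s : ℝ)⁻¹) ^ #s :=
        (rpow_inv_natCast_pow (prod_nonneg hz) (by positivity)).symm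
    _ ≤ ((∑ i ∈ s, z i) / #s) ^ #s := by
      gcongr
      exact rpow_nonneg (prod_nonneg hz) _

theorem one_sub_add_mul_exp_pos {q : ℝ} (hq : q ∈ Set.Icc (0 : ℝ) 1) (t : ℝ) :
    0 < 1 - q + q * exp t := by
  rcases hq.2.lt_or_eq with hq1 | rfl
  · nlinarith [hq.1, exp_pos t]
  · simpa using exp_pos t

theorem exp_mul_le_one_sub_add_mul_exp {x : ℝ} (hx : x ∈ Set.Icc (0 : ℝ) 1) (t : ℝ) :
    exp (t * x) ≤ 1 - x + x * exp t := by
  have := convexOn_exp.2 (Set.mem_univ 0) (Set.mem_univ t) (sub_nonneg.2 hx.2) hx.1 (by ring)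
  simpa [mul_comm t x] using this

theorem prod_one_sub_add_mul_exp_le {ι : Type*} (s : Finset ι) {m : ι → ℝ}
    (hm : ∀ i ∈ s, m i ∈ Set.Icc (0 : ℝ) 1) (t : ℝ) :
    ∏ i ∈ s, (1 - m i + m i * exp t) ≤
      (1 - (∑ i ∈ s, m i) / #s + (∑ i ∈ s, m i) / #s * exp t) ^ #s := by
  rcases s.eq_empty_or_nonempty with rfl | hs
  · simp
  have hcard : (#s : ℝ) ≠ 0 := by positivity
  have hsum : (∑ i ∈ s, (1 - m i + m i * exp t)) / #s =
      1 - (∑ i ∈ s, m i) / #s + (∑ i ∈ s, m i) / #s * exp t := by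
    rw [sum_add_distrib, sum_sub_distrib, ← sum_mul, sum_const, nsmul_one]
    field_simp
  rw [← hsum]
  exact prod_le_mean_pow s _ fun i hi ↦ (one_sub_add_mul_exp_pos (hm i hi) t).le

section Probability

variable {Ω : Type*} [MeasurableSpace Ω] {μ : Measure Ω} [IsProbabilityMeasure μ] {X : Ω → ℝ}

theorem integral_mem_Icc_of_ae_mem_Icc {a b : ℝ} (hX : AEMeasurable X μ)
    (hb : ∀ᵐ ω ∂μ, X ω ∈ Set.Icc a b) : ∫ ω, X ω ∂μ ∈ Set.Icc a b := by
  have hint := Integrable.of_mem_Icc a b hX hb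
  constructor
  · simpa using integral_mono_ae (integrable_const a) hint (hb.mono fun _ h ↦ h.1)
  · simpa using integral_mono_ae hint (integrable_const b) (hb.mono fun _ h ↦ h.2)

theorem mgf_le_one_sub_add_mul_exp (hX : AEMeasurable X μ)
    (hb : ∀ᵐ ω ∂μ, X ω ∈ Set.Icc (0 : ℝ) 1) (t : ℝ) :
    mgf X μ t ≤ 1 - μ[X] + μ[X] * exp t := by
  have hint := Integrable.of_mem_Icc 0 1 hX hb
  calc mgf X μ t ≤ ∫ ω, (1 - X ω + X ω * exp t) ∂μ :=
        integral_mono_of_nonneg (.of_forall fun _ ↦ (exp_pos _).le)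
          (((integrable_const 1).sub hint).add (hint.mul_const _))
          (hb.mono fun _ h ↦ exp_mul_le_one_sub_add_mul_exp h t)
    _ = 1 - μ[X] + μ[X] * exp t := by
      have h1 : Integrable (fun ω ↦ 1 - X ω) μ := (integrable_const 1).sub hint
      rw [integral_add h1 (hint.mul_const _), integral_sub (integrable_const 1) hint,
        integral_mul_const]
      simp

end Probability

theorem exp_nat_mul_binKLRelaxed (n : ℕ) {γ q : ℝ} (hc : 0 < 1 - q + q * exp γ) (p : ℝ) :
    exp (n * binKLRelaxed γ p q) = exp (γ * (n * p)) / (1 - q + q * exp γ) ^ n := by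
  rw [binKLRelaxed, mul_sub, exp_sub, ← log_pow, exp_log (pow_pos hc n), mul_left_comm]

theorem exp_relaxedBinKL_le_one_general {Ω : Type*} [MeasurableSpace Ω]
    (μ : Measure Ω) [IsProbabilityMeasure μ]
    (n : ℕ) (X : Fin n → Ω → ℝ)
    (hmeas : ∀ i, Measurable (X i))
    (hindep : iIndepFun X μ)
    (hbound : ∀ i, ∀ᵐ ω ∂μ, X i ω ∈ Set.Icc (0:ℝ) 1)
    (γ : ℝ) :
    ∫ ω, Real.exp ((n : ℝ) *
        binKLRelaxed γ ((∑ i, X i ω) / n) ((∑ i, ∫ ω', X i ω' ∂μ) / n)) ∂μ ≤ 1 := by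
  obtain rfl | hn := n.eq_zero_or_pos
  · simp [binKLRelaxed]
  set m : Fin n → ℝ := fun i ↦ ∫ ω, X i ω ∂μ
  set q := (∑ i, m i) / n
  have hm i : m i ∈ Set.Icc (0 : ℝ) 1 :=
    integral_mem_Icc_of_ae_mem_Icc (hmeas i).aemeasurable (hbound i)
  have hq : q ∈ Set.Icc (0 : ℝ) 1 :=
    ⟨div_nonneg (sum_nonneg fun i _ ↦ (hm i).1) n.cast_nonneg,
      div_le_one_of_le₀ (by simpa using sum_le_card_nsmul univ m 1 fun i _ ↦ (hm i).2)
        n.cast_nonneg⟩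
  have hc := one_sub_add_mul_exp_pos hq γ
  have hn' : (n : ℝ) ≠ 0 := by positivity
  calc ∫ ω, exp (n * binKLRelaxed γ ((∑ i, X i ω) / n) q) ∂μ
      = mgf (∑ i, X i) μ γ / (1 - q + q * exp γ) ^ n := by
        simp_rw [exp_nat_mul_binKLRelaxed n hc, mul_div_cancel₀ _ hn', integral_div]
        simp [mgf, Finset.sum_apply]
    _ ≤ 1 := by
      rw [div_le_one (by positivity), hindep.mgf_sum hmeas]
      calc ∏ i, mgf (X i) μ γ ≤ ∏ i, (1 - m i + m i * exp γ) :=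
            prod_le_prod (fun _ _ ↦ mgf_nonneg)
              fun i _ ↦ mgf_le_one_sub_add_mul_exp (hmeas i).aemeasurable (hbound i) γ
        _ ≤ (1 - q + q * exp γ) ^ n := by
          simpa using prod_one_sub_add_mul_exp_le univ (fun i _ ↦ hm i) γ

/-- Hoeffding-type exponential moment bound: for independent `[0,1]`-valued
random variables `X₁,…,Xₙ` with means `μᵢ`, sample mean `X̄` and mean average `μ`,
for any `γ`, `E[exp(n · d_γ(X̄‖μ))] ≤ 1`. -/
theorem exp_relaxedBinKL_le_one {Ω : Type*} [MeasurableSpace Ω]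
    (μ : Measure Ω) [IsProbabilityMeasure μ]
    (n : ℕ) (hn : 0 < n) (X : Fin n → Ω → ℝ)
    (hmeas : ∀ i, Measurable (X i))
    (hindep : iIndepFun X μ)
    (hbound : ∀ i, ∀ᵐ ω ∂μ, X i ω ∈ Set.Icc (0:ℝ) 1)
    (γ : ℝ) :
    ∫ ω, Real.exp ((n : ℝ) *
        binKLRelaxed γ ((∑ i, X i ω) / n) ((∑ i, ∫ ω', X i ω' ∂μ) / n)) ∂μ ≤ 1 :=
  exp_relaxedBinKL_le_one_general μ n X hmeas hindep hbound γ
end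

section
/- For any symmetric positive-definite matrix A partitioned as A = [[B, Dᵀ],[D, C]] with B and C square, the determinant satisfies |A| ≤ |B|·|C| (Fischer's inequality). -/
/-!
Write `A = [[B, Dᵀ], [D, C]]`. Its Schur complement `S = C - D B⁻¹ Dᵀ` is positive semidefinite
and `det A = det B · det S`, while `C = S + D B⁻¹ Dᵀ` adds a positive semidefinite matrix to `S`.
The determinant is monotone on positive semidefinite matrices: if `P = Rᴴ R` then
`det (S + P) = det S · det (1 + R S⁻¹ Rᴴ)`, and `det (1 + Q) = ∏ (1 + λᵢ) ≥ 1` for `Q ≥ 0`.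
-/

open Matrix

namespace Matrix

variable {m n : Type*} [Fintype m] [Fintype n] [DecidableEq m] [DecidableEq n]

theorem PosSemidef.one_le_det_one_add {Q : Matrix n n ℝ} (hQ : Q.PosSemidef) :
    1 ≤ (1 + Q).det := by
  set U := hQ.1.eigenvectorUnitary
  have hconj :
      1 + Q = U * diagonal (fun i ↦ 1 + hQ.1.eigenvalues i) * star (U : Matrix n n ℝ) := by
    conv_lhs => rw [hQ.1.spectral_theorem]
    rw [← map_one (Unitary.conjStarAlgAut ℝ _ U), ← map_add, Unitary.conjStarAlgAut_apply,
      ← diagonal_one, diagonal_add]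
    rfl
  rw [hconj, det_mul_right_comm, Unitary.mul_star_self_of_mem U.2, Matrix.one_mul, det_diagonal]
  exact Finset.one_le_prod fun i _ ↦ le_add_of_nonneg_right (hQ.eigenvalues_nonneg i)

open scoped MatrixOrder in
theorem PosSemidef.det_le_det_add {S P : Matrix n n ℝ} (hS : S.PosSemidef) (hP : P.PosSemidef) :
    S.det ≤ (S + P).det := by
  by_cases hdet : S.det = 0
  · simpa [hdet] using (hS.add hP).det_nonneg
  obtain ⟨R, rfl⟩ := CStarAlgebra.nonneg_iff_eq_star_mul_self.mp hP.nonneg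
  rw [star_eq_conjTranspose, det_add_mul _ _ (isUnit_iff_ne_zero.2 hdet)]
  exact le_mul_of_one_le_right hS.det_nonneg
    (hS.inv.mul_mul_conjTranspose_same R).one_le_det_one_add

theorem PosDef.det_fromBlocks_le {A : Matrix m m ℝ} {B : Matrix m n ℝ} {D : Matrix n n ℝ}
    (h : (fromBlocks A B Bᴴ D).PosDef) : (fromBlocks A B Bᴴ D).det ≤ A.det * D.det := by
  have hA : A.PosDef := h.submatrix Sum.inl_injective (e := Sum.inl)
  let := hA.isUnit.invertible
  have hSchur : (D - Bᴴ * A⁻¹ * B).PosSemidef := (PosDef.fromBlocks₁₁ B D hA).1 h.posSemidef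
  have hcorr : (Bᴴ * A⁻¹ * B).PosSemidef := hA.inv.posSemidef.conjTranspose_mul_mul_same B
  rw [det_fromBlocks₁₁, invOf_eq_nonsing_inv]
  calc A.det * (D - Bᴴ * A⁻¹ * B).det
      ≤ A.det * (D - Bᴴ * A⁻¹ * B + Bᴴ * A⁻¹ * B).det :=
        mul_le_mul_of_nonneg_left (hSchur.det_le_det_add hcorr) hA.det_pos.le
    _ = A.det * D.det := by rw [sub_add_cancel]

end Matrix

/-- Fischer's inequality: for a symmetric positive-definite block matrix
`A = [[B, Dᵀ],[D, C]]` with square diagonal blocks, `det A ≤ det B · det C`. -/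
theorem fischer_inequality {m n : ℕ}
    (B : Matrix (Fin m) (Fin m) ℝ) (C : Matrix (Fin n) (Fin n) ℝ)
    (D : Matrix (Fin n) (Fin m) ℝ)
    (hA : (Matrix.fromBlocks B D.transpose D C).PosDef) :
    (Matrix.fromBlocks B D.transpose D C).det ≤ B.det * C.det := by
  have hA' : (fromBlocks B Dᵀ Dᵀᴴ C).PosDef := by
    rwa [conjTranspose_eq_transpose_of_trivial, transpose_transpose]
  simpa only [conjTranspose_eq_transpose_of_trivial, transpose_transpose] using
    hA'.det_fromBlocks_le
end

section
/- For any 0 < C₂ ≤ log 2 and C₁ ≥ −log(2 − e^{C₂})/C₂ − 1, and for all a, b ∈ [0,1], it holds that e^{C₂(a − (1+C₁)b)} + e^{C₂(b − (1+C₁)a)} ≤ 2. -/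
/-!
Both exponents are affine in `a` and in `b`, so the left-hand side is convex in each variable
separately and its maximum over `[0,1]²` is attained at a corner. At `(0,0)` it equals `2`; at
`(1,0)` and `(0,1)` it equals `e^{C₂} + e^{-C₂(1+C₁)}`, which is `≤ 2` exactly by the hypothesis on
`C₁`; at `(1,1)` it equals `2e^{-C₂C₁}`, and `C₁ ≥ 0` follows from the same hypothesis because
`2 - e^{C₂} ≤ e^{-C₂}`.
-/

open Real Set

theorem convexOn_exp_mul_add (k c : ℝ) : ConvexOn ℝ univ fun x => exp (k * x + c) :=
  (convexOn_exp.comp_affineMap (AffineMap.lineMap c (c + k))).congr fun x _ => by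
    simp only [Function.comp_apply, AffineMap.lineMap_apply_ring']
    ring_nf

theorem le_of_convexOn_Icc_of_corners {f : ℝ → ℝ → ℝ} {x₀ x₁ y₀ y₁ x y M : ℝ}
    (hfx : ∀ y ∈ Icc y₀ y₁, ConvexOn ℝ (Icc x₀ x₁) (f · y))
    (hfy₀ : ConvexOn ℝ (Icc y₀ y₁) (f x₀)) (hfy₁ : ConvexOn ℝ (Icc y₀ y₁) (f x₁))
    (h₀₀ : f x₀ y₀ ≤ M) (h₀₁ : f x₀ y₁ ≤ M) (h₁₀ : f x₁ y₀ ≤ M) (h₁₁ : f x₁ y₁ ≤ M)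
    (hx : x ∈ Icc x₀ x₁) (hy : y ∈ Icc y₀ y₁) : f x y ≤ M := by
  have hx₀ : x₀ ∈ Icc x₀ x₁ := left_mem_Icc.2 (hx.1.trans hx.2)
  have hx₁ : x₁ ∈ Icc x₀ x₁ := right_mem_Icc.2 (hx.1.trans hx.2)
  have hy₀ : y₀ ∈ Icc y₀ y₁ := left_mem_Icc.2 (hy.1.trans hy.2)
  have hy₁ : y₁ ∈ Icc y₀ y₁ := right_mem_Icc.2 (hy.1.trans hy.2)
  calc f x y ≤ max (f x₀ y) (f x₁ y) := (hfx y hy).le_max_of_mem_Icc hx₀ hx₁ hx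
    _ ≤ M := max_le ((hfy₀.le_max_of_mem_Icc hy₀ hy₁ hy).trans (max_le h₀₀ h₀₁))
      ((hfy₁.le_max_of_mem_Icc hy₀ hy₁ hy).trans (max_le h₁₀ h₁₁))

theorem two_sub_exp_le_exp_neg (x : ℝ) : 2 - exp x ≤ exp (-x) := by
  have := one_le_cosh x
  rw [cosh_eq] at this
  linarith

noncomputable def expPair (c t a b : ℝ) : ℝ := exp (c * (a - t * b)) + exp (c * (b - t * a))

theorem expPair_comm (c t a b : ℝ) : expPair c t a b = expPair c t b a :=
  add_comm _ _

theorem convexOn_expPair_left (c t b : ℝ) : ConvexOn ℝ univ (expPair c t · b) :=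
  ((convexOn_exp_mul_add c (-(c * t * b))).add (convexOn_exp_mul_add (-(c * t)) (c * b))).congr
    fun a _ => by simp only [expPair, Pi.add_apply]; ring_nf

theorem convexOn_expPair_right (c t a : ℝ) : ConvexOn ℝ univ (expPair c t a) :=
  (convexOn_expPair_left c t a).congr fun b _ => expPair_comm c t b a

theorem expPair_zero_zero (c t : ℝ) : expPair c t 0 0 = 2 := by
  norm_num [expPair]

theorem expPair_zero_one (c t : ℝ) : expPair c t 0 1 = exp c + exp (-(c * t)) := by
  simp only [expPair]; ring_nf

theorem expPair_one_one (c t : ℝ) : expPair c t 1 1 = 2 * exp (c * (1 - t)) := by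
  simp only [expPair]; ring_nf

theorem exp_add_exp_neg_mul_le_two {c t : ℝ} (hc : 0 < c) (hc2 : c < log 2)
    (ht : -log (2 - exp c) / c ≤ t) : exp c + exp (-(c * t)) ≤ 2 := by
  have hpos : 0 < 2 - exp c := by
    have := exp_lt_exp.2 hc2
    rw [exp_log two_pos] at this
    linarith
  have hlog : -(c * t) ≤ log (2 - exp c) := by
    have := (div_le_iff₀ hc).1 ht
    linarith
  have := (exp_le_exp.2 hlog).trans_eq (exp_log hpos)
  linarith

theorem one_le_of_exp_add_exp_neg_mul_le_two {c t : ℝ} (hc : 0 < c)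
    (h : exp c + exp (-(c * t)) ≤ 2) : 1 ≤ t := by
  have : exp (-(c * t)) ≤ exp (-c) := by linarith [two_sub_exp_le_exp_neg c]
  nlinarith [exp_le_exp.1 this]

/-- Key exponential-moment inequality for fast-rate bounds: for `0 < C₂ < log 2`,
`C₁ ≥ −log(2 − e^{C₂})/C₂ − 1` and `a, b ∈ [0,1]`,
`e^{C₂(a − (1+C₁)b)} + e^{C₂(b − (1+C₁)a)} ≤ 2`. -/
theorem exp_pair_le_two (C₁ C₂ a b : ℝ)
    (h1 : 0 < C₂) (h2 : C₂ < Real.log 2)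
    (h3 : -Real.log (2 - Real.exp C₂) / C₂ - 1 ≤ C₁)
    (ha : a ∈ Set.Icc (0:ℝ) 1) (hb : b ∈ Set.Icc (0:ℝ) 1) :
    Real.exp (C₂ * (a - (1 + C₁) * b)) + Real.exp (C₂ * (b - (1 + C₁) * a)) ≤ 2 := by
  set t := 1 + C₁
  have hmixed : exp C₂ + exp (-(C₂ * t)) ≤ 2 := exp_add_exp_neg_mul_le_two h1 h2 (by linarith)
  have hdiag : expPair C₂ t 1 1 ≤ 2 := by
    have ht : 1 ≤ t := one_le_of_exp_add_exp_neg_mul_le_two h1 hmixed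
    have := exp_le_one_iff.2 (mul_nonpos_of_nonneg_of_nonpos h1.le (by linarith : 1 - t ≤ 0))
    rw [expPair_one_one]
    linarith
  rw [← expPair_zero_one] at hmixed
  have hIcc {g : ℝ → ℝ} (hg : ConvexOn ℝ univ g) : ConvexOn ℝ (Icc 0 1) g :=
    hg.subset (subset_univ _) (convex_Icc 0 1)
  exact le_of_convexOn_Icc_of_corners (f := expPair C₂ t)
    (fun b _ => hIcc (convexOn_expPair_left C₂ t b))
    (hIcc (convexOn_expPair_right C₂ t 0)) (hIcc (convexOn_expPair_right C₂ t 1))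
    (expPair_zero_zero C₂ t).le hmixed (expPair_comm C₂ t 1 0 ▸ hmixed) hdiag ha hb
end

section
/- For any 0 < C₂ ≤ (log 2)/2 and C₁ ≥ −log(2 − e^{2C₂})/(2C₂) − 1, and for all x ∈ [0,1], it holds that e^{2C₂ x} + e^{−2C₂(C₁+1)x} ≤ 2. -/
open Real Set

lemma convexOn_exp_mul_add_exp_mul (a b : ℝ) :
    ConvexOn ℝ univ (fun x ↦ exp (a * x) + exp (b * x)) :=
  (convexOn_exp.comp_linearMap (LinearMap.mul ℝ ℝ a)).add
    (convexOn_exp.comp_linearMap (LinearMap.mul ℝ ℝ b))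

lemma exp_mul_add_exp_mul_le_two {a b x : ℝ} (h : exp a + exp b ≤ 2)
    (hx : x ∈ Icc (0 : ℝ) 1) :
    exp (a * x) + exp (b * x) ≤ 2 := by
  have hseg : x ∈ segment ℝ (0 : ℝ) 1 := by rwa [segment_eq_Icc zero_le_one]
  calc exp (a * x) + exp (b * x)
      ≤ max (exp (a * 0) + exp (b * 0)) (exp (a * 1) + exp (b * 1)) :=
        (convexOn_exp_mul_add_exp_mul a b).le_on_segment (mem_univ _) (mem_univ _) hseg
    _ ≤ 2 := max_le (by norm_num) (by simpa using h)

lemma exp_add_exp_neg_le_two {a b : ℝ} (ha : exp a < 2) (hb : -log (2 - exp a) ≤ b) :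
    exp a + exp (-b) ≤ 2 := by
  have : exp (-b) ≤ 2 - exp a := by
    rwa [← le_log_iff_exp_le (by linarith), neg_le]
  linarith

/-- Single-loss exponential-moment inequality: for `0 < C₂ < (log 2)/2`,
`C₁ ≥ −log(2 − e^{2C₂})/(2C₂) − 1` and `x ∈ [0,1]`,
`e^{2C₂x} + e^{−2C₂(C₁+1)x} ≤ 2`. -/
theorem exp_single_le_two (C₁ C₂ x : ℝ)
    (h1 : 0 < C₂) (h2 : C₂ < Real.log 2 / 2)
    (h3 : -Real.log (2 - Real.exp (2 * C₂)) / (2 * C₂) - 1 ≤ C₁)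
    (hx : x ∈ Set.Icc (0:ℝ) 1) :
    Real.exp (2 * C₂ * x) + Real.exp (-2 * C₂ * (C₁ + 1) * x) ≤ 2 := by
  have hexp : exp (2 * C₂) < 2 := by
    rw [← lt_log_iff_exp_lt two_pos]; linarith
  have hb : -log (2 - exp (2 * C₂)) ≤ 2 * C₂ * (C₁ + 1) := by
    rw [← div_le_iff₀' (by positivity)]; linarith
  have hend : exp (2 * C₂) + exp (-2 * C₂ * (C₁ + 1)) ≤ 2 := by
    simpa only [neg_mul] using exp_add_exp_neg_le_two hexp hb
  exact exp_mul_add_exp_mul_le_two hend hx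
end
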